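/- For all constants c_1 > 1 and c_2 ∈ (1, ∞) there exists c_3 < ∞, depending only on c_1 and c_2, with the following property. Let m, q_1 ≥ 1 and n_1, …, n_m ≥ 1 be integers, let Z_i ∈ ℝ^{n_i × q_1} for i = 1, …, m, set n = Σ_i n_i and n̄ = n/m, and suppose (i) n̄/q_1 ≥ c_1 and (ii) c_2^{-1} ≤ γ_min(Z_iᵀZ_i) ≤ γ_max(Z_iᵀZ_i) ≤ c_2 for every i. Let Ψ_1 ∈ ℝ^{q_1×q_1} be symmetric positive semi-definite and ψ_r > 0, and set Σ(ψ) = bdiag(Z_1Ψ_1Z_1ᵀ, …, Z_mΨ_mZ_mᵀ)|_{Ψ_i=Ψ_1} + ψ_r I_n, i.e., the block-diagonal matrix with blocks Z_iΨ_1Z_iᵀ plus ψ_r I_n. For a symmetric V_1 ∈ ℝ^{q_1×q_1} and v_r ∈ ℝ, not both zero, set Σ(v) = bdiag(Z_1V_1Z_1ᵀ, …, Z_mV_1Z_mᵀ) + v_r I_n and, when ‖Σ(ψ)^{-1/2}Σ(v)Σ(ψ)^{-1/2}‖_F ≠ 0, a(v,ψ) = ‖Σ(ψ)^{-1/2}Σ(v)Σ(ψ)^{-1/2}‖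 / ‖Σ(ψ)^{-1/2}Σ(v)Σ(ψ)^{-1/2}‖_F. Then for every such (V_1, v_r), a(v,ψ) ≤ c_3 · m^{-1/2} · (1 + ‖vech(Ψ_1)‖/ψ_r), where vech(Ψ_1) is the vector of lower-triangular entries (including the diagonal) of Ψ_1 and ‖·‖ its Euclidean norm. -/

import Mathlib

open Matrix

open Classical in
/-- The positive semidefinite square root of a matrix (junk value `0` off the
positive semidefinite matrices). -/
noncomputable def msqrt {ι : Type*} [Fintype ι] [DecidableEq ι] (M : Matrix ι ι ℝ) :
    Matrix ι ι ℝ :=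
  if h : M.PosSemidef then
    (h.1.eigenvectorUnitary : Matrix ι ι ℝ) *
      Matrix.diagonal (fun i => Real.sqrt (h.1.eigenvalues i)) *
      (star h.1.eigenvectorUnitary : Matrix ι ι ℝ)
  else 0

/-- The spectral norm of a real square matrix. -/
noncomputable def specNorm {ι : Type*} [Fintype ι] [DecidableEq ι]
    (M : Matrix ι ι ℝ) : ℝ :=
  ‖Matrix.toEuclideanCLM (𝕜 := ℝ) M‖

/-- The Frobenius norm of a real matrix. -/
noncomputable def frobNorm {ι : Type*} [Fintype ι] (M : Matrix ι ι ℝ) : ℝ :=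
  Real.sqrt (∑ i, ∑ j, (M i j) ^ 2)

/-- The block-diagonal covariance matrix `bdiag(Z₁ V₁ Z₁ᵀ, …, Z_m V₁ Z_mᵀ) + v_r I_n`
of the independent-cluster model. -/
noncomputable def SigmaClust {m q1 : ℕ} (nn : Fin m → ℕ)
    (Z : ∀ i : Fin m, Matrix (Fin (nn i)) (Fin q1) ℝ)
    (V1 : Matrix (Fin q1) (Fin q1) ℝ) (vr : ℝ) :
    Matrix (Σ i : Fin m, Fin (nn i)) (Σ i : Fin m, Fin (nn i)) ℝ :=
  Matrix.blockDiagonal' (fun i => Z i * V1 * (Z i)ᵀ) + vr • 1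

/-- The Euclidean norm of the half-vectorization of a `q₁ × q₁` matrix (its
lower-triangular entries, including the diagonal). -/
noncomputable def vechNorm {q1 : ℕ} (M : Matrix (Fin q1) (Fin q1) ℝ) : ℝ :=
  Real.sqrt (∑ k : Fin q1, ∑ l : Fin q1, if (l : ℕ) ≤ (k : ℕ) then M k l ^ 2 else 0)

/-! Write `S = Σ(ψ)`, `R = S^{1/2}`, `A = Σ(v)` and `B = R⁻¹ A R⁻¹`. Since `S ≥ ψ_r I`,
`‖B‖ ≤ ‖R⁻¹‖² ‖A‖ = ‖S⁻¹‖ ‖A‖ ≤ ‖A‖ / ψ_r`, and `‖A‖_F = ‖R B R‖_F ≤ ‖R‖² ‖B‖_F = ‖S‖ ‖B‖_F`, so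
`a(v, ψ) ≤ ‖S‖ ‖A‖ / (ψ_r ‖A‖_F)`. Blockwise, `‖A‖ ≤ c₂ ‖V₁‖_F + |v_r|` and
`‖S‖ ≤ √2 c₂ (‖vech Ψ₁‖ + ψ_r)`.

The substance is the lower bound `‖A‖_F² ≥ κ m (‖V₁‖_F² + v_r²)`. With `G = Zᵢᵀ Zᵢ`, the block
`M = Zᵢ V₁ Zᵢᵀ` has the same Frobenius norm and trace as the `q₁ × q₁` matrix `G^{1/2} V₁ G^{1/2}`;
hence `(tr M)² ≤ q₁ ‖M‖_F²` and `‖V₁‖_F ≤ c₂ ‖M‖_F`. In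
`‖M + v_r I‖_F² = ‖M‖_F² + 2 v_r tr M + v_r² nᵢ` the cross term costs a fraction `2 / (c₁ + 1)` of
`‖M‖_F²` and `(c₁ + 1) q₁ v_r² / 2` of the last term, which `n ≥ c₁ m q₁` still leaves positive
after summing over the clusters. -/

open scoped Matrix.Norms.L2Operator

namespace Matrix

section L2

variable {m n : Type*} [Fintype m] [Fintype n]

lemma norm_toLp_sq (x : n → ℝ) : ‖WithLp.toLp 2 x‖ ^ 2 = x ⬝ᵥ x := by
  rw [EuclideanSpace.real_norm_sq_eq]
  simp [dotProduct, sq]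

lemma dotProduct_le_norm_mul_norm (x y : n → ℝ) :
    x ⬝ᵥ y ≤ ‖WithLp.toLp 2 x‖ * ‖WithLp.toLp 2 y‖ := by
  have := real_inner_le_norm (WithLp.toLp 2 x : EuclideanSpace ℝ n) (WithLp.toLp 2 y)
  simpa [EuclideanSpace.inner_eq_star_dotProduct, dotProduct_comm] using this

variable [DecidableEq n]

lemma norm_toLp_mulVec_le (A : Matrix m n ℝ) (x : n → ℝ) :
    ‖WithLp.toLp 2 (A *ᵥ x)‖ ≤ ‖A‖ * ‖WithLp.toLp 2 x‖ :=
  A.l2_opNorm_mulVec (WithLp.toLp 2 x)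

lemma norm_le_of_norm_toLp_mulVec_le (A : Matrix m n ℝ) {C : ℝ} (hC : 0 ≤ C)
    (h : ∀ x, ‖WithLp.toLp 2 (A *ᵥ x)‖ ≤ C * ‖WithLp.toLp 2 x‖) : ‖A‖ ≤ C :=
  ContinuousLinearMap.opNorm_le_bound _ hC fun x => h x.ofLp

lemma dotProduct_mulVec_self_le (A : Matrix m n ℝ) (x : n → ℝ) :
    (A *ᵥ x) ⬝ᵥ (A *ᵥ x) ≤ ‖A‖ ^ 2 * (x ⬝ᵥ x) := by
  rw [← norm_toLp_sq, ← norm_toLp_sq, ← mul_pow]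
  exact pow_le_pow_left₀ (norm_nonneg _) (norm_toLp_mulVec_le A x) 2

lemma norm_le_of_dotProduct_mulVec_self_le (A : Matrix m n ℝ) {C : ℝ} (hC : 0 ≤ C)
    (h : ∀ x, (A *ᵥ x) ⬝ᵥ (A *ᵥ x) ≤ C ^ 2 * (x ⬝ᵥ x)) : ‖A‖ ≤ C := by
  refine norm_le_of_norm_toLp_mulVec_le A hC fun x => ?_
  refine pow_le_pow_iff_left₀ (norm_nonneg _) (by positivity) two_ne_zero |>.1 ?_
  rw [mul_pow, norm_toLp_sq, norm_toLp_sq]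
  exact h x

lemma l2_opNorm_transpose [DecidableEq m] (A : Matrix m n ℝ) : ‖Aᵀ‖ = ‖A‖ := by
  simpa using A.l2_opNorm_conjTranspose

lemma l2_opNorm_transpose_mul_self (A : Matrix m n ℝ) : ‖Aᵀ * A‖ = ‖A‖ * ‖A‖ := by
  simpa using A.l2_opNorm_conjTranspose_mul_self

lemma l2_opNorm_smul_one_le (c : ℝ) : ‖c • (1 : Matrix n n ℝ)‖ ≤ |c| := by
  refine norm_le_of_dotProduct_mulVec_self_le _ (abs_nonneg c) fun x => ?_
  simp only [smul_mulVec, one_mulVec, dotProduct_smul, smul_dotProduct, smul_eq_mul, sq_abs]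
  rw [← mul_assoc, ← sq]

lemma isUnit_det_of_le_dotProduct_mulVec (S : Matrix n n ℝ) {α : ℝ} (hα : 0 < α)
    (hS : ∀ x, α * (x ⬝ᵥ x) ≤ x ⬝ᵥ S *ᵥ x) : IsUnit S.det := by
  refine isUnit_iff_ne_zero.2 fun h0 => ?_
  obtain ⟨v, hv, hSv⟩ := exists_mulVec_eq_zero_iff.2 h0
  have := hS v
  rw [hSv, dotProduct_zero] at this
  exact hv (dotProduct_self_eq_zero.1 (le_antisymm (nonpos_of_mul_nonpos_right this hα)
    (dotProduct_self_star_nonneg v)))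

lemma norm_inv_le_of_le_dotProduct_mulVec (S : Matrix n n ℝ) {α : ℝ} (hα : 0 < α)
    (hS : ∀ x, α * (x ⬝ᵥ x) ≤ x ⬝ᵥ S *ᵥ x) : ‖S⁻¹‖ ≤ α⁻¹ := by
  have hdet := isUnit_det_of_le_dotProduct_mulVec S hα hS
  refine norm_le_of_norm_toLp_mulVec_le _ (inv_nonneg.2 hα.le) fun x => ?_
  set y := S⁻¹ *ᵥ x
  have hSy : S *ᵥ y = x := by simp [y, mulVec_mulVec, mul_nonsing_inv _ hdet]
  have key : α * ‖WithLp.toLp 2 y‖ ^ 2 ≤ ‖WithLp.toLp 2 y‖ * ‖WithLp.toLp 2 x‖ := by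
    rw [norm_toLp_sq]
    exact (hS y).trans (hSy ▸ dotProduct_le_norm_mul_norm y x)
  rw [inv_mul_eq_div, le_div_iff₀ hα]
  rcases (norm_nonneg (WithLp.toLp 2 y)).eq_or_lt with h | h
  · rw [← h, zero_mul]; exact norm_nonneg _
  · nlinarith

end L2

section Sqrt

variable {n : Type*} [Fintype n] [DecidableEq n]

lemma msqrt_mul_self {S : Matrix n n ℝ} (hS : S.PosSemidef) : msqrt S * msqrt S = S := by
  have hU : (star hS.1.eigenvectorUnitary : Matrix n n ℝ) * hS.1.eigenvectorUnitary = 1 :=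
    Unitary.coe_star_mul_self _
  have hD : diagonal (fun i => √(hS.1.eigenvalues i)) * diagonal (fun i => √(hS.1.eigenvalues i))
      = diagonal (RCLike.ofReal ∘ hS.1.eigenvalues) := by
    rw [diagonal_mul_diagonal]
    congr 1; funext i
    simp [Real.mul_self_sqrt (hS.eigenvalues_nonneg i)]
  rw [msqrt, dif_pos hS]
  conv_rhs => rw [hS.1.spectral_theorem, Unitary.conjStarAlgAut_apply, ← hD]
  simp only [Matrix.mul_assoc]
  rw [← Matrix.mul_assoc (star hS.1.eigenvectorUnitary : Matrix n n ℝ), hU, Matrix.one_mul]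

lemma msqrt_transpose {S : Matrix n n ℝ} (hS : S.PosSemidef) : (msqrt S)ᵀ = msqrt S := by
  have hst : (star hS.1.eigenvectorUnitary : Matrix n n ℝ) =
      (hS.1.eigenvectorUnitary : Matrix n n ℝ)ᵀ := by
    rw [star_eq_conjTranspose, conjTranspose_eq_transpose_of_trivial]
  rw [msqrt, dif_pos hS, transpose_mul, transpose_mul, diagonal_transpose, hst,
    transpose_transpose, Matrix.mul_assoc]

lemma l2_opNorm_msqrt_mul_self {S : Matrix n n ℝ} (hS : S.PosSemidef) :
    ‖msqrt S‖ * ‖msqrt S‖ = ‖S‖ := by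
  rw [← l2_opNorm_transpose_mul_self, msqrt_transpose hS, msqrt_mul_self hS]

lemma l2_opNorm_inv_msqrt_mul_self {S : Matrix n n ℝ} (hS : S.PosSemidef) :
    ‖(msqrt S)⁻¹‖ * ‖(msqrt S)⁻¹‖ = ‖S⁻¹‖ := by
  rw [← l2_opNorm_transpose_mul_self, transpose_nonsing_inv, msqrt_transpose hS,
    ← Matrix.mul_inv_rev, msqrt_mul_self hS]

end Sqrt

section Frobenius

variable {n : Type*} [Fintype n]

lemma frobNorm_nonneg (M : Matrix n n ℝ) : 0 ≤ frobNorm M := Real.sqrt_nonneg _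

lemma frobNorm_sq (M : Matrix n n ℝ) : frobNorm M ^ 2 = ∑ i, ∑ j, M i j ^ 2 :=
  Real.sq_sqrt (Finset.sum_nonneg fun _ _ => Finset.sum_nonneg fun _ _ => sq_nonneg _)

lemma frobNorm_le_of_sq_le {M : Matrix n n ℝ} {C : ℝ} (hC : 0 ≤ C)
    (h : frobNorm M ^ 2 ≤ C ^ 2) : frobNorm M ≤ C :=
  pow_le_pow_iff_left₀ (frobNorm_nonneg M) hC two_ne_zero |>.1 h

lemma frobNorm_transpose (M : Matrix n n ℝ) : frobNorm Mᵀ = frobNorm M := by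
  rw [frobNorm, frobNorm, Finset.sum_comm]; rfl

lemma frobNorm_sq_eq_sum_dotProduct_col (M : Matrix n n ℝ) :
    frobNorm M ^ 2 = ∑ j, Mᵀ j ⬝ᵥ Mᵀ j := by
  rw [frobNorm_sq, Finset.sum_comm]
  simp [dotProduct, sq]

lemma frobNorm_sq_eq_trace (M : Matrix n n ℝ) : frobNorm M ^ 2 = trace (Mᵀ * M) := by
  rw [frobNorm_sq_eq_sum_dotProduct_col]
  simp [trace, mul_apply, dotProduct]

lemma trace_sq_le_card_mul_frobNorm_sq (M : Matrix n n ℝ) :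
    trace M ^ 2 ≤ Fintype.card n * frobNorm M ^ 2 := by
  have hdiag : ∑ i, M i i ^ 2 ≤ frobNorm M ^ 2 := by
    rw [frobNorm_sq]
    exact Finset.sum_le_sum fun i _ =>
      Finset.single_le_sum (fun j _ => sq_nonneg (M i j)) (Finset.mem_univ i)
  calc trace M ^ 2 = (∑ i, 1 * M i i) ^ 2 := by simp [trace]
    _ ≤ (∑ _i : n, (1 : ℝ) ^ 2) * ∑ i, M i i ^ 2 := Finset.sum_mul_sq_le_sq_mul_sq _ _ _
    _ ≤ Fintype.card n * frobNorm M ^ 2 := by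
      simp only [one_pow, Finset.sum_const, Finset.card_univ, nsmul_one]
      gcongr

variable [DecidableEq n]

lemma frobNorm_mul_le_l2_opNorm_mul (A B : Matrix n n ℝ) :
    frobNorm (A * B) ≤ ‖A‖ * frobNorm B := by
  refine frobNorm_le_of_sq_le (by positivity [frobNorm_nonneg B]) ?_
  rw [frobNorm_sq_eq_sum_dotProduct_col, mul_pow, frobNorm_sq_eq_sum_dotProduct_col,
    Finset.mul_sum]
  refine Finset.sum_le_sum fun j _ => ?_
  have hcol : (A * B)ᵀ j = A *ᵥ Bᵀ j := by
    ext i; simp [mul_apply, mulVec, dotProduct]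
  rw [hcol]
  exact dotProduct_mulVec_self_le A _

lemma frobNorm_mul_le_mul_l2_opNorm (A B : Matrix n n ℝ) :
    frobNorm (A * B) ≤ frobNorm A * ‖B‖ := by
  rw [← frobNorm_transpose, transpose_mul, mul_comm, ← frobNorm_transpose A,
    ← l2_opNorm_transpose B]
  exact frobNorm_mul_le_l2_opNorm_mul _ _

lemma l2_opNorm_le_frobNorm (A : Matrix n n ℝ) : ‖A‖ ≤ frobNorm A := by
  refine norm_le_of_dotProduct_mulVec_self_le A (frobNorm_nonneg A) fun x => ?_
  rw [frobNorm_sq, Finset.sum_mul]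
  refine Finset.sum_le_sum fun i _ => ?_
  simpa [mulVec, dotProduct, sq] using Finset.sum_mul_sq_le_sq_mul_sq Finset.univ (A i) x

lemma frobNorm_eq_zero {M : Matrix n n ℝ} : frobNorm M = 0 ↔ M = 0 :=
  ⟨fun h => norm_le_zero_iff.1 (h ▸ l2_opNorm_le_frobNorm M), fun h => by simp [h, frobNorm]⟩

lemma frobNorm_sq_add_sq_pos {M : Matrix n n ℝ} {c : ℝ} (h : ¬(M = 0 ∧ c = 0)) :
    0 < frobNorm M ^ 2 + c ^ 2 := by
  by_contra! hle
  have hM : frobNorm M ^ 2 = 0 := by linarith [sq_nonneg (frobNorm M), sq_nonneg c]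
  have hc : c ^ 2 = 0 := by linarith [sq_nonneg c]
  exact h ⟨frobNorm_eq_zero.1 (pow_eq_zero_iff two_ne_zero |>.1 hM),
    pow_eq_zero_iff two_ne_zero |>.1 hc⟩

lemma frobNorm_add_smul_one_sq (M : Matrix n n ℝ) (c : ℝ) :
    frobNorm (M + c • 1) ^ 2 = frobNorm M ^ 2 + 2 * c * trace M + c ^ 2 * Fintype.card n := by
  have hentry : ∀ i j,
      (M + c • 1) i j ^ 2 = M i j ^ 2 + if i = j then 2 * c * M i j + c ^ 2 else 0 := by
    intro i j
    by_cases h : i = j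
    · simp [h]; ring
    · simp [h]
  simp only [frobNorm_sq, hentry, Finset.sum_add_distrib, Finset.sum_ite_eq, Finset.mem_univ,
    if_true, trace, diag, Finset.mul_sum, Finset.sum_const, Finset.card_univ, nsmul_eq_mul]
  ring

lemma frobNorm_add_smul_one_sq_ge (M : Matrix n n ℝ) (c : ℝ) {q t : ℝ} (hq : 0 ≤ q) (ht : 0 < t)
    (hM : trace M ^ 2 ≤ q * frobNorm M ^ 2) :
    (1 - t) * frobNorm M ^ 2 + c ^ 2 * (Fintype.card n - q / t) ≤ frobNorm (M + c • 1) ^ 2 := by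
  set a := t * frobNorm M ^ 2
  set b := c ^ 2 * q / t
  -- `(2 c tr M)² ≤ 4ab ≤ (a + b)²`
  have hab : (2 * c * trace M) ^ 2 ≤ (a + b) ^ 2 := by
    have h4ab : 4 * a * b = 4 * c ^ 2 * (q * frobNorm M ^ 2) := by
      simp only [a, b]; field_simp
    nlinarith [sq_nonneg (a - b), mul_le_mul_of_nonneg_left hM (sq_nonneg c)]
  have hcross := (abs_le_of_sq_le_sq' hab (by positivity)).1
  rw [frobNorm_add_smul_one_sq]
  have : c ^ 2 * (q / t) = b := by simp only [b]; ring
  nlinarith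

end Frobenius

section Conjugation

variable {n : Type*} [Fintype n] [DecidableEq n]

lemma l2_opNorm_div_frobNorm_conj_inv_msqrt_le {S : Matrix n n ℝ}
    (hS : S.PosSemidef) {α : ℝ} (hα : 0 < α) (hSα : ∀ x, α * (x ⬝ᵥ x) ≤ x ⬝ᵥ S *ᵥ x)
    (A : Matrix n n ℝ) :
    ‖(msqrt S)⁻¹ * A * (msqrt S)⁻¹‖ / frobNorm ((msqrt S)⁻¹ * A * (msqrt S)⁻¹)
      ≤ ‖S‖ * ‖A‖ / (α * frobNorm A) := by
  set R := msqrt S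
  set B := R⁻¹ * A * R⁻¹
  have hRdet : IsUnit R.det := by
    have h := isUnit_det_of_le_dotProduct_mulVec S hα hSα
    rw [← msqrt_mul_self hS, det_mul] at h
    exact isUnit_of_mul_isUnit_left h
  have hB : ‖B‖ ≤ α⁻¹ * ‖A‖ :=
    calc ‖B‖ ≤ ‖R⁻¹‖ * ‖A‖ * ‖R⁻¹‖ := (norm_mul_le _ _).trans (by gcongr; exact norm_mul_le _ _)
      _ = ‖S⁻¹‖ * ‖A‖ := by rw [← l2_opNorm_inv_msqrt_mul_self hS]; ring
      _ ≤ α⁻¹ * ‖A‖ := by gcongr; exact norm_inv_le_of_le_dotProduct_mulVec S hα hSα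
  have hRBR : R * B * R = A := by
    simp only [B, Matrix.mul_assoc, nonsing_inv_mul _ hRdet, Matrix.mul_one,
      mul_nonsing_inv_cancel_left _ _ hRdet]
  have hA : frobNorm A ≤ ‖S‖ * frobNorm B :=
    calc frobNorm A = frobNorm (R * B * R) := by rw [hRBR]
      _ ≤ ‖R‖ * frobNorm B * ‖R‖ :=
        (frobNorm_mul_le_mul_l2_opNorm _ _).trans
          (by gcongr; exact frobNorm_mul_le_l2_opNorm_mul _ _)
      _ = ‖S‖ * frobNorm B := by rw [← l2_opNorm_msqrt_mul_self hS]; ring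
  rcases (frobNorm_nonneg A).eq_or_lt with hA0 | hApos
  · have hnA : ‖A‖ = 0 := le_antisymm (hA0 ▸ l2_opNorm_le_frobNorm A) (norm_nonneg A)
    have hnB : ‖B‖ = 0 := le_antisymm (by simpa [hnA] using hB) (norm_nonneg B)
    simp [hnA, hnB]
  · have hBpos : 0 < frobNorm B := pos_of_mul_pos_right (hApos.trans_le hA) (norm_nonneg S)
    rw [div_le_div_iff₀ hBpos (by positivity)]
    calc ‖B‖ * (α * frobNorm A) ≤ (α⁻¹ * ‖A‖) * (α * (‖S‖ * frobNorm B)) := by gcongr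
      _ = ‖S‖ * ‖A‖ * frobNorm B := by field_simp

end Conjugation

section Gram

variable {n q : Type*} [Fintype n] [Fintype q]

lemma trace_gram_mul_mul_transpose {k : Type*} [Fintype k] (A : Matrix k q ℝ) (V : Matrix q q ℝ) :
    trace ((A * V * Aᵀ)ᵀ * (A * V * Aᵀ)) = trace (Vᵀ * (Aᵀ * A) * V * (Aᵀ * A)) := by
  simp only [transpose_mul, transpose_transpose, Matrix.mul_assoc]
  rw [trace_mul_comm A]
  simp only [Matrix.mul_assoc]

lemma trace_mul_mul_transpose {k : Type*} [Fintype k] (A : Matrix k q ℝ) (V : Matrix q q ℝ) :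
    trace (A * V * Aᵀ) = trace (Aᵀ * A * V) := by
  rw [trace_mul_comm, Matrix.mul_assoc]

lemma dotProduct_mulVec_gram (Z : Matrix n q ℝ) (x : q → ℝ) :
    x ⬝ᵥ (Zᵀ * Z) *ᵥ x = (Z *ᵥ x) ⬝ᵥ (Z *ᵥ x) := by
  rw [← mulVec_mulVec, dotProduct_mulVec, vecMul_transpose]

variable [DecidableEq q]

lemma frobNorm_mul_mul_transpose_eq_msqrt (Z : Matrix n q ℝ) (V : Matrix q q ℝ) :
    frobNorm (Z * V * Zᵀ) = frobNorm (msqrt (Zᵀ * Z) * V * msqrt (Zᵀ * Z)) := by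
  have hG : (Zᵀ * Z).PosSemidef := by simpa using posSemidef_conjTranspose_mul_self Z
  refine (sq_eq_sq₀ (frobNorm_nonneg _) (frobNorm_nonneg _)).1 ?_
  have hL := trace_gram_mul_mul_transpose (msqrt (Zᵀ * Z)) V
  rw [msqrt_transpose hG, msqrt_mul_self hG] at hL
  rw [frobNorm_sq_eq_trace, frobNorm_sq_eq_trace, trace_gram_mul_mul_transpose, hL]

lemma trace_mul_mul_transpose_eq_msqrt (Z : Matrix n q ℝ) (V : Matrix q q ℝ) :
    trace (Z * V * Zᵀ) = trace (msqrt (Zᵀ * Z) * V * msqrt (Zᵀ * Z)) := by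
  have hG : (Zᵀ * Z).PosSemidef := by simpa using posSemidef_conjTranspose_mul_self Z
  have hL := trace_mul_mul_transpose (msqrt (Zᵀ * Z)) V
  rw [msqrt_transpose hG, msqrt_mul_self hG] at hL
  rw [trace_mul_mul_transpose, hL]

lemma trace_mul_mul_transpose_sq_le (Z : Matrix n q ℝ) (V : Matrix q q ℝ) :
    trace (Z * V * Zᵀ) ^ 2 ≤ Fintype.card q * frobNorm (Z * V * Zᵀ) ^ 2 := by
  rw [trace_mul_mul_transpose_eq_msqrt, frobNorm_mul_mul_transpose_eq_msqrt]
  exact trace_sq_le_card_mul_frobNorm_sq _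

lemma frobNorm_le_mul_frobNorm_mul_mul_transpose (Z : Matrix n q ℝ) {c : ℝ} (hc : 0 < c)
    (hZ : ∀ x, c⁻¹ * (x ⬝ᵥ x) ≤ x ⬝ᵥ (Zᵀ * Z) *ᵥ x) (V : Matrix q q ℝ) :
    frobNorm V ≤ c * frobNorm (Z * V * Zᵀ) := by
  have hG : (Zᵀ * Z).PosSemidef := by simpa using posSemidef_conjTranspose_mul_self Z
  set L := msqrt (Zᵀ * Z)
  have hLdet : IsUnit L.det := by
    have h := isUnit_det_of_le_dotProduct_mulVec _ (inv_pos.2 hc) hZ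
    rw [← msqrt_mul_self hG, det_mul] at h
    exact isUnit_of_mul_isUnit_left h
  have hLinv : ‖L⁻¹‖ * ‖L⁻¹‖ ≤ c := by
    rw [l2_opNorm_inv_msqrt_mul_self hG]
    simpa using norm_inv_le_of_le_dotProduct_mulVec _ (inv_pos.2 hc) hZ
  have hV : L⁻¹ * (L * V * L) * L⁻¹ = V := by
    rw [Matrix.mul_assoc, Matrix.mul_assoc (L * V), mul_nonsing_inv _ hLdet, Matrix.mul_one,
      ← Matrix.mul_assoc, nonsing_inv_mul _ hLdet, Matrix.one_mul]
  calc frobNorm V = frobNorm (L⁻¹ * (L * V * L) * L⁻¹) := by rw [hV]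
    _ ≤ ‖L⁻¹‖ * frobNorm (L * V * L) * ‖L⁻¹‖ :=
      (frobNorm_mul_le_mul_l2_opNorm _ _).trans
        (by gcongr; exact frobNorm_mul_le_l2_opNorm_mul _ _)
    _ = ‖L⁻¹‖ * ‖L⁻¹‖ * frobNorm (Z * V * Zᵀ) := by
      rw [frobNorm_mul_mul_transpose_eq_msqrt]; ring
    _ ≤ c * frobNorm (Z * V * Zᵀ) := by gcongr; exact frobNorm_nonneg _

lemma l2_opNorm_mul_mul_transpose_le [DecidableEq n] (Z : Matrix n q ℝ) {c : ℝ} (hc : 0 ≤ c)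
    (hZ : ∀ x, x ⬝ᵥ (Zᵀ * Z) *ᵥ x ≤ c * (x ⬝ᵥ x)) (V : Matrix q q ℝ) :
    ‖Z * V * Zᵀ‖ ≤ c * frobNorm V := by
  have hZc : ‖Z‖ ≤ √c := norm_le_of_dotProduct_mulVec_self_le Z (Real.sqrt_nonneg c) fun x => by
    rw [← dotProduct_mulVec_gram, Real.sq_sqrt hc]; exact hZ x
  calc ‖Z * V * Zᵀ‖ ≤ ‖Z‖ * ‖V‖ * ‖Z‖ := by
        refine (l2_opNorm_mul _ _).trans ?_
        rw [l2_opNorm_transpose]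
        gcongr
        exact l2_opNorm_mul _ _
    _ = ‖Z‖ ^ 2 * ‖V‖ := by ring
    _ ≤ √c ^ 2 * frobNorm V := by gcongr; exact l2_opNorm_le_frobNorm V
    _ = c * frobNorm V := by rw [Real.sq_sqrt hc]

end Gram

section BlockDiagonal

variable {o : Type*} [Fintype o] {d : o → Type*} [∀ i, Fintype (d i)]

lemma dotProduct_sigma {R : Type*} [NonUnitalNonAssocSemiring R] (x y : (Σ i, d i) → R) :
    x ⬝ᵥ y = ∑ i, (fun a => x ⟨i, a⟩) ⬝ᵥ (fun a => y ⟨i, a⟩) :=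
  Fintype.sum_sigma _

variable [DecidableEq o]

lemma blockDiagonal'_mulVec_apply {R : Type*} [NonUnitalNonAssocSemiring R]
    (M : ∀ i, Matrix (d i) (d i) R) (x : (Σ i, d i) → R) (i : o) :
    (fun a => (blockDiagonal' M *ᵥ x) ⟨i, a⟩) = M i *ᵥ fun b => x ⟨i, b⟩ := by
  ext a
  rw [mulVec, dotProduct_sigma, Finset.sum_eq_single i]
  · simp [blockDiagonal'_apply_eq, mulVec]
  · intro j _ hj
    exact Finset.sum_eq_zero fun b _ => by simp [blockDiagonal'_apply_ne _ _ _ (Ne.symm hj)]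
  · simp

lemma dotProduct_blockDiagonal'_mulVec {R : Type*} [NonUnitalNonAssocSemiring R]
    (M : ∀ i, Matrix (d i) (d i) R) (x y : (Σ i, d i) → R) :
    x ⬝ᵥ blockDiagonal' M *ᵥ y = ∑ i, (fun a => x ⟨i, a⟩) ⬝ᵥ M i *ᵥ fun b => y ⟨i, b⟩ := by
  simp only [dotProduct_sigma x, blockDiagonal'_mulVec_apply]

lemma PosSemidef.blockDiagonal' {M : ∀ i, Matrix (d i) (d i) ℝ} (hM : ∀ i, (M i).PosSemidef) :
    (Matrix.blockDiagonal' M).PosSemidef := by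
  refine posSemidef_iff_dotProduct_mulVec.2 ⟨?_, fun x => ?_⟩
  · rw [IsHermitian, blockDiagonal'_conjTranspose]
    exact congrArg _ (funext fun i => (hM i).1.eq)
  · rw [star_trivial, dotProduct_blockDiagonal'_mulVec]
    exact Finset.sum_nonneg fun i _ => by simpa using (hM i).dotProduct_mulVec_nonneg _

lemma frobNorm_blockDiagonal'_sq (M : ∀ i, Matrix (d i) (d i) ℝ) :
    frobNorm (blockDiagonal' M) ^ 2 = ∑ i, frobNorm (M i) ^ 2 := by
  simp only [frobNorm_sq, Fintype.sum_sigma]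
  refine Finset.sum_congr rfl fun i _ => Finset.sum_congr rfl fun a _ => ?_
  rw [Finset.sum_eq_single i]
  · simp [blockDiagonal'_apply_eq]
  · intro j _ hj
    exact Finset.sum_eq_zero fun b _ => by simp [blockDiagonal'_apply_ne _ _ _ (Ne.symm hj)]
  · simp

variable [∀ i, DecidableEq (d i)]

lemma l2_opNorm_blockDiagonal'_le {M : ∀ i, Matrix (d i) (d i) ℝ} {C : ℝ} (hC : 0 ≤ C)
    (hM : ∀ i, ‖M i‖ ≤ C) : ‖blockDiagonal' M‖ ≤ C := by
  refine norm_le_of_dotProduct_mulVec_self_le _ hC fun x => ?_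
  rw [dotProduct_sigma, dotProduct_sigma x, Finset.mul_sum]
  refine Finset.sum_le_sum fun i _ => ?_
  rw [blockDiagonal'_mulVec_apply]
  refine (dotProduct_mulVec_self_le _ _).trans ?_
  gcongr
  · exact dotProduct_self_star_nonneg _
  · exact hM i

end BlockDiagonal

end Matrix

lemma frobNorm_le_sqrt_two_mul_vechNorm {q : ℕ} {Ψ : Matrix (Fin q) (Fin q) ℝ} (hΨ : Ψ.IsSymm) :
    frobNorm Ψ ≤ √2 * vechNorm Ψ := by
  set v := ∑ k : Fin q, ∑ l : Fin q, if (l : ℕ) ≤ (k : ℕ) then Ψ k l ^ 2 else 0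
  have hv : 0 ≤ v := Finset.sum_nonneg fun k _ => Finset.sum_nonneg fun l _ => by
    split_ifs <;> positivity
  have hsymm : ∀ k l, Ψ l k = Ψ k l := fun k l => hΨ.apply k l
  -- every entry lies in the lower or in the upper triangle, and the upper one mirrors the lower
  have hentry : ∀ k l : Fin q, Ψ k l ^ 2 ≤ (if (l : ℕ) ≤ (k : ℕ) then Ψ k l ^ 2 else 0) +
      if (k : ℕ) ≤ (l : ℕ) then Ψ l k ^ 2 else 0 := fun k l => by
    rw [hsymm]
    rcases le_total (l : ℕ) k with h | h <;> simp [h] <;> split_ifs <;> positivity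
  have hupper : (∑ k : Fin q, ∑ l : Fin q, if (k : ℕ) ≤ (l : ℕ) then Ψ l k ^ 2 else 0) = v :=
    Finset.sum_comm
  refine Matrix.frobNorm_le_of_sq_le (by positivity [Real.sqrt_nonneg v]) ?_
  rw [Matrix.frobNorm_sq, mul_pow, Real.sq_sqrt zero_le_two, vechNorm, Real.sq_sqrt hv]
  calc ∑ k, ∑ l, Ψ k l ^ 2
      ≤ v + ∑ k : Fin q, ∑ l : Fin q, if (k : ℕ) ≤ (l : ℕ) then Ψ l k ^ 2 else 0 := by
        rw [← Finset.sum_add_distrib]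
        exact Finset.sum_le_sum fun k _ => by
          rw [← Finset.sum_add_distrib]; exact Finset.sum_le_sum fun l _ => hentry k l
    _ = 2 * v := by rw [hupper]; ring

section Clusters

variable {m q1 : ℕ} {nn : Fin m → ℕ} (Z : ∀ i : Fin m, Matrix (Fin (nn i)) (Fin q1) ℝ)

lemma SigmaClust_eq_blockDiagonal' (V : Matrix (Fin q1) (Fin q1) ℝ) (vr : ℝ) :
    SigmaClust nn Z V vr = blockDiagonal' fun i => Z i * V * (Z i)ᵀ + vr • 1 := by
  have h : (fun i => Z i * V * (Z i)ᵀ + vr • 1) = (fun i => Z i * V * (Z i)ᵀ) + vr • 1 := rfl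
  rw [h, blockDiagonal'_add, blockDiagonal'_smul, blockDiagonal'_one, SigmaClust]

lemma l2_opNorm_SigmaClust_le {c : ℝ} (hc : 0 ≤ c)
    (hZ : ∀ i x, x ⬝ᵥ ((Z i)ᵀ * Z i) *ᵥ x ≤ c * (x ⬝ᵥ x)) (V : Matrix (Fin q1) (Fin q1) ℝ)
    (vr : ℝ) : ‖SigmaClust nn Z V vr‖ ≤ c * frobNorm V + |vr| :=
  (norm_add_le _ _).trans <| add_le_add
    (l2_opNorm_blockDiagonal'_le (by positivity [frobNorm_nonneg V])
      fun i => l2_opNorm_mul_mul_transpose_le (Z i) hc (hZ i) V)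
    (l2_opNorm_smul_one_le vr)

lemma posSemidef_SigmaClust {Ψ : Matrix (Fin q1) (Fin q1) ℝ} (hΨ : Ψ.PosSemidef) {ψr : ℝ}
    (hψr : 0 ≤ ψr) : (SigmaClust nn Z Ψ ψr).PosSemidef :=
  (PosSemidef.blockDiagonal' fun i => by simpa using hΨ.mul_mul_conjTranspose_same (Z i)).add
    (PosSemidef.one.smul hψr)

lemma le_dotProduct_SigmaClust_mulVec {Ψ : Matrix (Fin q1) (Fin q1) ℝ} (hΨ : Ψ.PosSemidef)
    (ψr : ℝ) (x : (Σ i, Fin (nn i)) → ℝ) : ψr * (x ⬝ᵥ x) ≤ x ⬝ᵥ SigmaClust nn Z Ψ ψr *ᵥ x := by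
  have h := (posSemidef_SigmaClust Z hΨ le_rfl).dotProduct_mulVec_nonneg x
  rw [SigmaClust, add_mulVec, dotProduct_add, smul_mulVec, one_mulVec, dotProduct_smul,
    smul_eq_mul]
  simp only [SigmaClust, zero_smul, add_zero, star_trivial] at h
  linarith

lemma l2_opNorm_SigmaClust_le_sqrt {c : ℝ} (hc : 0 ≤ c)
    (hZ : ∀ i x, x ⬝ᵥ ((Z i)ᵀ * Z i) *ᵥ x ≤ c * (x ⬝ᵥ x)) (V : Matrix (Fin q1) (Fin q1) ℝ)
    (vr : ℝ) : ‖SigmaClust nn Z V vr‖ ≤ (c + 1) * √(frobNorm V ^ 2 + vr ^ 2) := by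
  have hV : frobNorm V ≤ √(frobNorm V ^ 2 + vr ^ 2) :=
    (Real.le_sqrt (frobNorm_nonneg V) (by positivity)).2 (by linarith [sq_nonneg vr])
  have hvr : |vr| ≤ √(frobNorm V ^ 2 + vr ^ 2) :=
    (Real.le_sqrt (abs_nonneg vr) (by positivity)).2
      (by rw [sq_abs]; linarith [sq_nonneg (frobNorm V)])
  nlinarith [l2_opNorm_SigmaClust_le Z hc hZ V vr, mul_le_mul_of_nonneg_left hV hc]

lemma l2_opNorm_SigmaClust_le_vechNorm {c : ℝ} (hc : 1 ≤ c)
    (hZ : ∀ i x, x ⬝ᵥ ((Z i)ᵀ * Z i) *ᵥ x ≤ c * (x ⬝ᵥ x)) {Ψ : Matrix (Fin q1) (Fin q1) ℝ}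
    (hΨ : Ψ.IsSymm) {ψr : ℝ} (hψr : 0 ≤ ψr) :
    ‖SigmaClust nn Z Ψ ψr‖ ≤ √2 * c * (vechNorm Ψ + ψr) := by
  have h := l2_opNorm_SigmaClust_le Z (by linarith) hZ Ψ ψr
  rw [abs_of_nonneg hψr] at h
  have hc2 : 1 ≤ √2 * c := one_le_mul_of_one_le_of_one_le Real.one_lt_sqrt_two.le hc
  nlinarith [mul_le_mul_of_nonneg_left (frobNorm_le_sqrt_two_mul_vechNorm hΨ)
    (by linarith : (0 : ℝ) ≤ c)]

lemma frobNorm_SigmaClust_sq_ge {c1 c2 : ℝ} (hc1 : 1 < c1) (hc2 : 1 ≤ c2) (hq1 : 1 ≤ q1)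
    (hn : c1 * (m * q1) ≤ ∑ i, (nn i : ℝ))
    (hZ : ∀ i x, c2⁻¹ * (x ⬝ᵥ x) ≤ x ⬝ᵥ ((Z i)ᵀ * Z i) *ᵥ x) (V : Matrix (Fin q1) (Fin q1) ℝ)
    (vr : ℝ) :
    (c1 - 1) / ((c1 + 1) * c2 ^ 2) * (m * (frobNorm V ^ 2 + vr ^ 2))
      ≤ frobNorm (SigmaClust nn Z V vr) ^ 2 := by
  set κ := (c1 - 1) / ((c1 + 1) * c2 ^ 2)
  have hc2pos : 0 < c2 := by linarith
  have hκ0 : 0 ≤ κ := by positivity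
  -- with `t = 2 / (c1 + 1)` in `frobNorm_add_smul_one_sq_ge`, `1 - t = κ c2²`
  have hblock : ∀ i, κ * frobNorm V ^ 2 + vr ^ 2 * (nn i - q1 * (c1 + 1) / 2)
      ≤ frobNorm (Z i * V * (Z i)ᵀ + vr • 1) ^ 2 := fun i => by
    have hV := frobNorm_le_mul_frobNorm_mul_mul_transpose (Z i) hc2pos (hZ i) V
    have h := frobNorm_add_smul_one_sq_ge (Z i * V * (Z i)ᵀ) vr (Nat.cast_nonneg q1)
      (by positivity : (0 : ℝ) < 2 / (c1 + 1))
      (by simpa using trace_mul_mul_transpose_sq_le (Z i) V)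
    have hκ : 1 - 2 / (c1 + 1) = κ * c2 ^ 2 := by simp only [κ]; field_simp; ring
    have hq : (q1 : ℝ) / (2 / (c1 + 1)) = q1 * (c1 + 1) / 2 := by field_simp
    rw [hκ, hq, Fintype.card_fin] at h
    have hV2 : frobNorm V ^ 2 ≤ c2 ^ 2 * frobNorm (Z i * V * (Z i)ᵀ) ^ 2 := by
      rw [← mul_pow]; exact pow_le_pow_left₀ (frobNorm_nonneg V) hV 2
    nlinarith [mul_le_mul_of_nonneg_left hV2 hκ0]
  rw [SigmaClust_eq_blockDiagonal', frobNorm_blockDiagonal'_sq]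
  refine le_trans ?_ (Finset.sum_le_sum fun i _ => hblock i)
  simp only [Finset.sum_add_distrib, ← Finset.mul_sum, Finset.sum_sub_distrib, Finset.sum_const,
    Finset.card_univ, Fintype.card_fin, nsmul_eq_mul]
  have hκ : κ ≤ (c1 - 1) / 2 := div_le_div_of_nonneg_left (by linarith) two_pos (by nlinarith)
  have hq1' : (1 : ℝ) ≤ q1 := by exact_mod_cast hq1
  have hgap : κ * m ≤ ∑ i, (nn i : ℝ) - m * (q1 * (c1 + 1) / 2) := by
    nlinarith [mul_le_mul_of_nonneg_right hκ (Nat.cast_nonneg (α := ℝ) m),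
      mul_le_mul_of_nonneg_left hq1' (by positivity : (0 : ℝ) ≤ (c1 - 1) / 2 * m)]
  nlinarith [mul_le_mul_of_nonneg_left hgap (sq_nonneg vr)]

end Clusters

/-- Independent clusters: for all `c₁ > 1` and `c₂ ∈ (1,∞)` there is `c₃` depending
only on `c₁, c₂` such that, under (i) `n̄/q₁ ≥ c₁` and (ii) all eigenvalues of
`Zᵢᵀ Zᵢ` in `[c₂⁻¹, c₂]` (expressed via Rayleigh quotients), for every PSD `Ψ₁`,
`ψ_r > 0` and every symmetric `V₁`, `v_r` not both zero,
`a(v, ψ) ≤ c₃ m^{−1/2} (1 + ‖vech(Ψ₁)‖/ψ_r)`. -/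
theorem stmt15 (c1 c2 : ℝ) (hc1 : 1 < c1) (hc2 : 1 < c2) :
    ∃ c3 : ℝ, ∀ (m q1 : ℕ) (nn : Fin m → ℕ)
      (Z : ∀ i : Fin m, Matrix (Fin (nn i)) (Fin q1) ℝ),
      1 ≤ m → 1 ≤ q1 → (∀ i, 1 ≤ nn i) →
      c1 ≤ ((∑ i, nn i : ℕ) : ℝ) / ((m : ℝ) * (q1 : ℝ)) →
      (∀ (i : Fin m) (x : Fin q1 → ℝ),
        c2⁻¹ * (∑ k, x k ^ 2) ≤ x ⬝ᵥ ((Z i)ᵀ * Z i) *ᵥ x ∧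
        x ⬝ᵥ ((Z i)ᵀ * Z i) *ᵥ x ≤ c2 * (∑ k, x k ^ 2)) →
      ∀ (Ψ1 : Matrix (Fin q1) (Fin q1) ℝ), Ψ1.PosSemidef →
      ∀ ψr : ℝ, 0 < ψr →
      ∀ (V1 : Matrix (Fin q1) (Fin q1) ℝ), V1.IsSymm →
      ∀ vr : ℝ, ¬(V1 = 0 ∧ vr = 0) →
        specNorm ((msqrt (SigmaClust nn Z Ψ1 ψr))⁻¹ * SigmaClust nn Z V1 vr *
              (msqrt (SigmaClust nn Z Ψ1 ψr))⁻¹) /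
          frobNorm ((msqrt (SigmaClust nn Z Ψ1 ψr))⁻¹ * SigmaClust nn Z V1 vr *
              (msqrt (SigmaClust nn Z Ψ1 ψr))⁻¹)
        ≤ c3 * (Real.sqrt m)⁻¹ * (1 + vechNorm Ψ1 / ψr) := by
  set κ := (c1 - 1) / ((c1 + 1) * c2 ^ 2)
  have hκ : 0 < κ := div_pos (by linarith) (by positivity)
  refine ⟨√2 * c2 * (c2 + 1) / √κ, ?_⟩
  intro m q1 nn Z hm hq1 _ hn hZ Ψ1 hΨ ψr hψr V1 _ vr hv
  have hsq (x : Fin q1 → ℝ) : ∑ k, x k ^ 2 = x ⬝ᵥ x := by simp [dotProduct, sq]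
  simp only [hsq] at hZ
  have hm' : (0 : ℝ) < m := by exact_mod_cast hm
  have hn' : c1 * (m * q1) ≤ ∑ i, (nn i : ℝ) := by
    rw [le_div_iff₀ (by positivity), Nat.cast_sum] at hn; linarith
  set X := frobNorm V1 ^ 2 + vr ^ 2
  have hX : 0 < X := frobNorm_sq_add_sq_pos hv
  set A := SigmaClust nn Z V1 vr
  have hAF : √κ * √m * √X ≤ frobNorm A := by
    rw [← Real.sqrt_mul hκ.le, ← Real.sqrt_mul (by positivity),
      Real.sqrt_le_left (frobNorm_nonneg A), mul_assoc]
    exact frobNorm_SigmaClust_sq_ge Z hc1 hc2.le hq1 hn' (fun i x => (hZ i x).1) V1 vr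
  have hvech : 0 ≤ vechNorm Ψ1 := Real.sqrt_nonneg _
  calc _ ≤ ‖SigmaClust nn Z Ψ1 ψr‖ * ‖A‖ / (ψr * frobNorm A) :=
        l2_opNorm_div_frobNorm_conj_inv_msqrt_le (posSemidef_SigmaClust Z hΨ hψr.le)
          hψr (le_dotProduct_SigmaClust_mulVec Z hΨ ψr) A
    _ ≤ √2 * c2 * (vechNorm Ψ1 + ψr) * ((c2 + 1) * √X) / (ψr * (√κ * √m * √X)) := by
        gcongr
        · exact l2_opNorm_SigmaClust_le_vechNorm Z hc2.le (fun i x => (hZ i x).2)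
            (isHermitian_iff_isSymm.1 hΨ.1) hψr.le
        · exact l2_opNorm_SigmaClust_le_sqrt Z (by linarith) (fun i x => (hZ i x).2) V1 vr
    _ = _ := by field_simp; ring
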